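/- Suppose α : N →ₗ[R] R is an R-linear map satisfying α(D f) = 0 for every polynomial f ∈ P that is homogeneous of degree k+1. Then for every a : Fin m → R, writing ℓ_a := ∑ᵢ (a i) • X i ∈ P and δ_a := ∑ᵢ (a i) • δ i ∈ B, one has α(ℓ_a^k • (1 ⊗ δ_a)) = 0, i.e. α(ℓ_a^k ⊗ δ_a) = 0. (This is the paper's Proposition 'the function α(β) is identically zero' [PV, Lemma 4.2.6]: the cosection α built from ŵ annihilates the tautological section β induced by the complex A → B, because α kills the image of the Koszul differential d_{k+1} : Sym^{k+1}(A) → Sym^k(A) ⊗ B and d_{k+1}(a^{k+1}/(k+1)!) = a^k/k! ⊗ δ(a).) -/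
import Mathlib


open MvPolynomial TensorProduct

/-- If an `R`-linear functional `α` on `P ⊗[R] B` (where `P = MvPolynomial (Fin m) R` is the
symmetric algebra of `A = R^m`) kills `D f` for all homogeneous `f` of degree `k + 1`, where
`D` is the derivation with `D (X i) = 1 ⊗ δ i`, then `α` kills the image of the tautological
section: `α (ℓₐᵏ • (1 ⊗ δₐ)) = 0`, i.e. `α (ℓₐᵏ ⊗ δₐ) = 0`, where `ℓₐ = ∑ᵢ aᵢ • Xᵢ` and
`δₐ = ∑ᵢ aᵢ • δ i`. -/
theorem cosection_annihilates_tautological_section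
    {R : Type*} [CommRing R] [Algebra ℚ R] (m k : ℕ)
    {B : Type*} [AddCommGroup B] [Module R B] (δ : Fin m → B)
    (α : (MvPolynomial (Fin m) R ⊗[R] B) →ₗ[R] R)
    (hα : ∀ f : MvPolynomial (Fin m) R, f.IsHomogeneous (k + 1) →
      α (mkDerivation R (fun i => (1 : MvPolynomial (Fin m) R) ⊗ₜ[R] δ i) f) = 0)
    (a : Fin m → R) :
    α (((∑ i, a i • X i : MvPolynomial (Fin m) R) ^ k) •
        ((1 : MvPolynomial (Fin m) R) ⊗ₜ[R] (∑ i, a i • δ i))) = 0 ∧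
    α (((∑ i, a i • X i : MvPolynomial (Fin m) R) ^ k) ⊗ₜ[R] (∑ i, a i • δ i)) = 0 := by
  set D := mkDerivation R (fun i => (1 : MvPolynomial (Fin m) R) ⊗ₜ[R] δ i) with hD
  set ℓ : MvPolynomial (Fin m) R := ∑ i, a i • X i with hℓdef
  have hℓhom : ℓ.IsHomogeneous 1 := by
    apply IsHomogeneous.sum
    intro i _
    rw [smul_eq_C_mul]
    simpa using (isHomogeneous_C _ (a i)).mul (isHomogeneous_X R i)
  have hhom : (ℓ ^ (k + 1)).IsHomogeneous (k + 1) := by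
    have := hℓhom.pow (k + 1)
    simpa using this
  have hDℓ : D ℓ = (1 : MvPolynomial (Fin m) R) ⊗ₜ[R] (∑ i, a i • δ i) := by
    rw [hℓdef]
    rw [map_sum]
    simp [tmul_sum, tmul_smul, hD]
  have hpow : D (ℓ ^ (k + 1)) =
      (k + 1) • (ℓ ^ k • ((1 : MvPolynomial (Fin m) R) ⊗ₜ[R] (∑ i, a i • δ i))) := by
    rw [Derivation.leibniz_pow]
    simp [hDℓ]
  have h0 : (k + 1) •
      α (ℓ ^ k • ((1 : MvPolynomial (Fin m) R) ⊗ₜ[R] (∑ i, a i • δ i))) = 0 := by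
    rw [← map_nsmul, ← hpow]
    exact hα _ hhom
  have h1 : α (ℓ ^ k • ((1 : MvPolynomial (Fin m) R) ⊗ₜ[R] (∑ i, a i • δ i))) = 0 := by
    have hq : ((k + 1 : ℚ)) •
        α (ℓ ^ k • ((1 : MvPolynomial (Fin m) R) ⊗ₜ[R] (∑ i, a i • δ i))) = 0 := by
      rw [show ((k + 1 : ℚ)) = ((k + 1 : ℕ) : ℚ) by push_cast; ring,
        Nat.cast_smul_eq_nsmul]
      exact h0
    have hne : (k + 1 : ℚ) ≠ 0 := by positivity
    rcases smul_eq_zero.mp hq with h | h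
    · exact absurd h hne
    · exact h
  refine ⟨h1, ?_⟩
  have : ℓ ^ k • ((1 : MvPolynomial (Fin m) R) ⊗ₜ[R] (∑ i, a i • δ i)) =
      (ℓ ^ k) ⊗ₜ[R] (∑ i, a i • δ i) := by
    rw [smul_tmul', smul_eq_mul, mul_one]
  rw [← this]
  exact h1
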